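/- On the circle 𝕋 = ℝ/2πℤ, define μ* by dμ*(x) = (Σ_{k=1}^∞ g_k(x)) dx, where g_k = (2/π)·𝟙_{(π/2^k − π/2^{k+1}, π/2^k + π/2^{k+1}]} restricted appropriately so that the intervals I_k = B(π/2^k, π/2^{k+1}] are disjoint for distinct k. Then μ* is a probability measure, and there exists c > 0 such that for every x ∈ supp(μ*) and every r ∈ (0, π/8]: c·r ≤ μ*(B(x,r)) ≤ 2r, where B(x,r) is the arc of radius r around x. -/

import Mathlib

/-!
The dyadic intervals `(π/2^(k+2), π/2^(k+1)]` tile `(0, π/2]` and embed injectively into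
`ℝ/2πℤ`, so `mu13` is `2/π` times arc length restricted to the image `A` of `(0, π/2]`.
Its mass is `(2/π)·(π/2) = 1`; since `2/π ≤ 1`, a ball of radius `r` has mass at most its
length `≤ 2r`. The support lies in the closure of `A`, and for `t ∈ [0, π/2]` and `r ≤ π/2`
the ball `B(t, r)` contains an arc of `A` of length `r`: this gives the lower bound with
`c = 2/π`.
-/

open MeasureTheory Metric
open scoped ENNReal

/-- The support of a measure: points all of whose closed balls have positive measure. -/
def msupport {X : Type*} [MeasurableSpace X] [PseudoMetricSpace X] (μ : Measure X) : Set X :=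
  {x | ∀ r : ℝ, 0 < r → 0 < μ (Metric.closedBall x r)}

instance : Fact (0 < 2 * Real.pi) := ⟨by positivity⟩

/-- The measure on 𝕋 = ℝ/2πℤ with density (2/π) Σ_k 𝟙_{(π/2^{k+1}, π/2^k]}. -/
noncomputable def mu13 : Measure (AddCircle (2 * Real.pi)) :=
  (volume : Measure (AddCircle (2 * Real.pi))).withDensity fun x =>
    ∑' k : ℕ,
      Set.indicator
        ((fun t : ℝ => (t : AddCircle (2 * Real.pi))) ''
          Set.Ioc (Real.pi / 2 ^ (k + 2)) (Real.pi / 2 ^ (k + 1)))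
        (fun _ => ENNReal.ofReal (2 / Real.pi)) x

open Set Function Real

namespace AddCircle

theorem dist_coe_le {T : ℝ} (x y : ℝ) : dist (x : AddCircle T) y ≤ |x - y| := by
  rw [dist_eq_norm, ← coe_sub]
  exact QuotientAddGroup.norm_mk_le_norm

variable {T : ℝ} [Fact (0 < T)]

theorem injOn_coe_Ioc (t : ℝ) : InjOn ((↑) : ℝ → AddCircle T) (Ioc t (t + T)) :=
  fun _ hx _ hy h => (coe_eq_coe_iff_of_mem_Ioc hx hy).1 h

theorem image_coe_eq_preimage_equivIoc {t : ℝ} {s : Set ℝ} (hs : s ⊆ Ioc t (t + T)) :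
    ((↑) : ℝ → AddCircle T) '' s = (fun z => (equivIoc T t z : ℝ)) ⁻¹' s := by
  ext z
  constructor
  · rintro ⟨x, hx, rfl⟩
    simpa [equivIoc_coe_eq (hs hx)] using hx
  · intro hz
    exact ⟨_, hz, (equivIoc T t).symm_apply_apply z⟩

theorem measurableSet_image_coe {t : ℝ} {s : Set ℝ} (hs : s ⊆ Ioc t (t + T))
    (hm : MeasurableSet s) : MeasurableSet (((↑) : ℝ → AddCircle T) '' s) := by
  rw [image_coe_eq_preimage_equivIoc hs]
  exact (measurable_subtype_coe.comp (measurableEquivIoc T t).measurable) hm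

theorem volume_image_coe {t : ℝ} {s : Set ℝ} (hs : s ⊆ Ioc t (t + T)) (hm : MeasurableSet s) :
    volume (((↑) : ℝ → AddCircle T) '' s) = volume s := by
  rw [add_projection_respects_measure T t (measurableSet_image_coe hs hm),
    (injOn_coe_Ioc t).preimage_image_inter hs]

theorem volume_closedBall_le (x : AddCircle T) (r : ℝ) :
    volume (closedBall x r) ≤ ENNReal.ofReal (2 * r) := by
  rw [volume_closedBall]
  exact ENNReal.ofReal_le_ofReal (min_le_right _ _)

theorem ofReal_le_volume_closedBall_inter_image_Ioc {a t r : ℝ} (haT : a ≤ T)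
    (ht : t ∈ Icc 0 a) (hr : r ≤ a) :
    ENNReal.ofReal r ≤ volume (closedBall (t : AddCircle T) r ∩ (↑) '' Ioc 0 a) := by
  -- an arc of length `r` inside both `(0, a]` and `[t - r, t + r]`
  set u := min t (a - r)
  have hu : Ioc u (u + r) ⊆ Ioc 0 a ∩ Icc (t - r) (t + r) := by
    intro s hs
    have : u ≤ t := min_le_left _ _
    have : u ≤ a - r := min_le_right _ _
    have : 0 ≤ u := le_min ht.1 (by linarith)
    have : t - r ≤ u := le_min (by linarith [hs.1, hs.2]) (by linarith [ht.2])
    exact ⟨⟨by linarith [hs.1], by linarith [hs.2]⟩, by linarith [hs.1], by linarith [hs.2]⟩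
  have hImage : ((↑) : ℝ → AddCircle T) '' Ioc u (u + r) ⊆
      closedBall (t : AddCircle T) r ∩ (↑) '' Ioc 0 a := by
    rintro _ ⟨s, hs, rfl⟩
    refine ⟨(dist_coe_le s t).trans (abs_sub_le_iff.2 ⟨?_, ?_⟩), s, (hu hs).1, rfl⟩ <;>
      linarith [(hu hs).2.1, (hu hs).2.2]
  calc ENNReal.ofReal r = volume (((↑) : ℝ → AddCircle T) '' Ioc u (u + r)) := by
        rw [volume_image_coe ((hu.trans inter_subset_left).trans
            (Ioc_subset_Ioc le_rfl (by linarith))) measurableSet_Ioc,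
          Real.volume_Ioc, add_sub_cancel_left]
    _ ≤ _ := measure_mono hImage

end AddCircle

theorem iUnion_Ioc_div_two_pow {a : ℝ} (ha : 0 < a) :
    ⋃ k : ℕ, Ioc (a / 2 ^ (k + 1)) (a / 2 ^ k) = Ioc 0 a := by
  refine Subset.antisymm (iUnion_subset fun k => Ioc_subset_Ioc (by positivity) ?_) fun x hx => ?_
  · exact div_le_self ha.le (one_le_pow₀ one_le_two)
  · obtain ⟨k, hk, hk'⟩ := exists_nat_pow_near ((one_le_div hx.1).2 hx.2) one_lt_two
    refine mem_iUnion.2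
      ⟨k, (div_lt_iff₀ (by positivity)).2 ?_, (le_div_iff₀ (by positivity)).2 ?_⟩
    · rw [div_lt_iff₀ hx.1] at hk'; linarith
    · rw [le_div_iff₀ hx.1] at hk; linarith

theorem pairwise_disjoint_Ioc_div_two_pow {a : ℝ} (ha : 0 ≤ a) :
    Pairwise (Disjoint on fun k : ℕ => Ioc (a / 2 ^ (k + 1)) (a / 2 ^ k)) := by
  have : Antitone fun k : ℕ => a / 2 ^ k := fun i j h =>
    div_le_div_of_nonneg_left ha (by positivity) (pow_le_pow_right₀ one_le_two h)
  simpa using this.pairwise_disjoint_on_Ioc_succ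

namespace MeasureTheory.Measure

theorem withDensity_tsum_indicator_const {α ι : Type*} [MeasurableSpace α] [Countable ι]
    (μ : Measure α) {s : ι → Set α} (hs : ∀ i, MeasurableSet (s i))
    (hd : Pairwise (Disjoint on s)) (c : ℝ≥0∞) :
    μ.withDensity (fun x => ∑' i, (s i).indicator (fun _ => c) x) =
      c • μ.restrict (⋃ i, s i) := by
  have : (fun x => ∑' i, (s i).indicator (fun _ => c) x) =
      ∑' i, (s i).indicator (fun _ => c) := by
    ext x; rw [tsum_apply (Pi.summable.2 fun _ => ENNReal.summable)]
  rw [this, withDensity_tsum fun i => measurable_const.indicator (hs i), restrict_iUnion hd hs]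
  ext A hA
  simp [withDensity_indicator (hs _), withDensity_const, sum_apply _ hA, ENNReal.tsum_mul_left]

end MeasureTheory.Measure

theorem msupport_subset_closure_of_measure_compl_eq_zero {X : Type*} [MeasurableSpace X]
    [PseudoMetricSpace X] {μ : Measure X} {S : Set X} (h : μ Sᶜ = 0) :
    msupport μ ⊆ closure S := by
  intro x hx
  refine Metric.mem_closure_iff.2 fun ε hε => ?_
  by_contra! hS
  have hball : closedBall x (ε / 2) ⊆ Sᶜ := fun y hy hyS =>
    (hS y hyS).not_gt ((mem_closedBall'.1 hy).trans_lt (half_lt_self hε))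
  exact (hx _ (half_pos hε)).ne' (measure_mono_null hball h)

local notation "arcA" => ((↑) : ℝ → AddCircle (2 * π)) '' Ioc 0 (π / 2)

theorem Ioc_zero_pi_div_two_subset : Ioc 0 (π / 2) ⊆ Ioc 0 (0 + 2 * π) :=
  Ioc_subset_Ioc le_rfl (by linarith [pi_pos])

theorem mu13_eq : mu13 = ENNReal.ofReal (2 / π) • volume.restrict arcA := by
  have hpieces : ∀ k : ℕ, Ioc (π / 2 ^ (k + 2)) (π / 2 ^ (k + 1)) =
      Ioc (π / 2 / 2 ^ (k + 1)) (π / 2 / 2 ^ k) := by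
    intro k
    rw [div_div, div_div, ← pow_succ', ← pow_succ']
  have hsub (k : ℕ) : Ioc (π / 2 / 2 ^ (k + 1)) (π / 2 / 2 ^ k) ⊆ Ioc 0 (0 + 2 * π) :=
    (subset_iUnion_of_subset k subset_rfl).trans
      ((iUnion_Ioc_div_two_pow (by positivity)).subset.trans Ioc_zero_pi_div_two_subset)
  rw [mu13]
  simp_rw [hpieces]
  rw [← iUnion_Ioc_div_two_pow (by positivity), image_iUnion]
  refine Measure.withDensity_tsum_indicator_const _
    (fun k => AddCircle.measurableSet_image_coe (hsub k) measurableSet_Ioc) (fun i j hij => ?_) _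
  simp only [onFun, AddCircle.image_coe_eq_preimage_equivIoc (hsub _)]
  exact (pairwise_disjoint_Ioc_div_two_pow (by positivity) hij).preimage _

theorem isProbabilityMeasure_mu13 : IsProbabilityMeasure mu13 := by
  constructor
  rw [mu13_eq, Measure.smul_apply, Measure.restrict_apply_univ,
    AddCircle.volume_image_coe Ioc_zero_pi_div_two_subset measurableSet_Ioc,
    Real.volume_Ioc, smul_eq_mul, ← ENNReal.ofReal_mul (by positivity), sub_zero,
    div_mul_div_cancel₀ pi_pos.ne', div_self two_ne_zero, ENNReal.ofReal_one]

theorem msupport_mu13_subset :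
    msupport mu13 ⊆ ((↑) : ℝ → AddCircle (2 * π)) '' Icc 0 (π / 2) := by
  have hnull : mu13 (arcA)ᶜ = 0 := by
    rw [mu13_eq, Measure.smul_apply, Measure.restrict_apply' (AddCircle.measurableSet_image_coe
      Ioc_zero_pi_div_two_subset measurableSet_Ioc), compl_inter_self, measure_empty, smul_zero]
  exact (msupport_subset_closure_of_measure_compl_eq_zero hnull).trans
    (closure_minimal (image_mono Ioc_subset_Icc_self)
      (isCompact_Icc.image (AddCircle.continuous_mk' _)).isClosed)

theorem mu13_closedBall_le (x : AddCircle (2 * π)) (r : ℝ) :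
    mu13 (closedBall x r) ≤ ENNReal.ofReal (2 * r) := by
  have hc : ENNReal.ofReal (2 / π) ≤ 1 :=
    ENNReal.ofReal_le_one.2 ((div_le_one pi_pos).2 two_le_pi)
  calc mu13 (closedBall x r)
      ≤ ENNReal.ofReal (2 / π) * volume (closedBall x r) := by
        rw [mu13_eq, Measure.smul_apply, smul_eq_mul]
        gcongr
        exact Measure.restrict_le_self
    _ ≤ 1 * ENNReal.ofReal (2 * r) := by gcongr; exact AddCircle.volume_closedBall_le x r
    _ = ENNReal.ofReal (2 * r) := one_mul _

theorem ofReal_mul_le_mu13_closedBall {t r : ℝ} (ht : t ∈ Icc 0 (π / 2)) (hr : r ≤ π / 2) :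
    ENNReal.ofReal (2 / π * r) ≤ mu13 (closedBall (t : AddCircle (2 * π)) r) := by
  rw [mu13_eq, Measure.smul_apply, Measure.restrict_apply measurableSet_closedBall, smul_eq_mul,
    ENNReal.ofReal_mul (by positivity)]
  gcongr
  exact AddCircle.ofReal_le_volume_closedBall_inter_image_Ioc (by linarith [pi_pos]) ht hr

/-- mu13 is a probability measure and for every point of its support and
every radius 0 < r ≤ π/8, c·r ≤ μ(B(x,r)) ≤ 2r. -/
theorem stmt13 :
    IsProbabilityMeasure mu13 ∧
    ∃ c : ℝ, 0 < c ∧ ∀ x ∈ msupport mu13, ∀ r : ℝ, 0 < r → r ≤ Real.pi / 8 →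
      ENNReal.ofReal (c * r) ≤ mu13 (Metric.closedBall x r) ∧
      mu13 (Metric.closedBall x r) ≤ ENNReal.ofReal (2 * r) := by
  refine ⟨isProbabilityMeasure_mu13, 2 / π, by positivity, fun x hx r _ hr => ?_⟩
  obtain ⟨t, ht, rfl⟩ := msupport_mu13_subset hx
  exact ⟨ofReal_mul_le_mu13_closedBall ht (by linarith [pi_pos]), mu13_closedBall_le _ r⟩
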